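/- Let d ≥ 4 be an integer, k a field, and n ≥ 3. Let m and m' be degree-n monomials in the variables w_x (x ∈ W_d) with ψ(m) = ψ(m'). Then m − m' belongs to the ideal of k[w_x : x ∈ W_d] generated by all binomials u − u' of degree-(n−1) monomials with ψ(u) = ψ(u') if and only if there exists a finite sequence m = m₁, m₂, …, m_t = m' of degree-n monomials such that ψ(m_j) = ψ(m) for every j and, for each 1 ≤ j < t, the supports of m_j and m_{j+1} have a common variable. -/

import Mathlib

/-!
Call two monomials of degree `n + 1` adjacent when they have the same image under `ψ` and share
a variable `w_i`. An adjacent pair is `w_i u` and `w_i u'` with `ψ u = ψ u'` after cancelling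
`ψ w_i` (a nonzero monomial), so its difference is a multiple of a degree-`n` binomial of the
fibre; chaining gives one implication. Conversely, the ideal generated by these binomials is
spanned over `k` by the products `μ (u - u')` with `μ` a monomial. For `μ ≠ 0` the monomials
`μ u`, `μ u'` are adjacent, and for `μ = 0` both have degree `n`, so the functional summing the
coefficients over the connected component of `m` kills the ideal. Evaluating it on `m - m'`
shows that `m'` lies in that component.
-/

open MvPolynomial

/-- `W_d`: triples `(r,γ,δ)` encoding the degree-`d` monomials invariant under the
action of the diagonal matrix `M(1,e,e²,e³)`. -/
def Wset (d : ℕ) : Set (ℤ × ℤ × ℤ) :=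
  {x | 0 ≤ x.1 ∧ x.1 ≤ 3 ∧ 0 ≤ x.2.1 ∧ 0 ≤ x.2.2 ∧
    0 ≤ x.2.2 + 2 * x.2.1 + (1 - x.1) * (d : ℤ) ∧ 2 * x.2.2 + 3 * x.2.1 ≤ x.1 * (d : ℤ)}

/-- The toric parametrization `ψ : k[w_x : x ∈ W_d] → k[x,y,z,t]`,
`w_{(r,γ,δ)} ↦ x^{δ+2γ+(1−r)d} y^{rd−2δ−3γ} z^δ t^γ`. -/
noncomputable def psi (d : ℕ) (K : Type*) [CommSemiring K] :
    MvPolynomial ↥(Wset d) K →ₐ[K] MvPolynomial (Fin 4) K :=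
  aeval fun x =>
    X 0 ^ ((x.val.2.2 + 2 * x.val.2.1 + (1 - x.val.1) * (d : ℤ)).toNat) *
    X 1 ^ ((x.val.1 * (d : ℤ) - 2 * x.val.2.2 - 3 * x.val.2.1).toNat) *
    X 2 ^ (x.val.2.2.toNat) *
    X 3 ^ (x.val.2.1.toNat)

namespace Relation

theorem reflTransGen_iff_exists_fin {α : Type*} {r : α → α → Prop} {a b : α} :
    ReflTransGen r a b ↔ ∃ (t : ℕ) (g : Fin (t + 1) → α),
      g 0 = a ∧ g (Fin.last t) = b ∧ ∀ j : Fin t, r (g j.castSucc) (g j.succ) := by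
  constructor
  · intro h
    induction h using ReflTransGen.head_induction_on with
    | refl => exact ⟨0, fun _ => b, rfl, rfl, fun j => j.elim0⟩
    | head hac _ ih =>
      obtain ⟨t, g, hg0, hgt, hg⟩ := ih
      refine ⟨t + 1, Fin.cons _ g, rfl, by simpa using hgt, fun j => ?_⟩
      cases j using Fin.cases with
      | zero => simpa [hg0] using hac
      | succ j => simpa [← Fin.succ_castSucc] using hg j
  · rintro ⟨t, g, rfl, rfl, hg⟩
    suffices ∀ j, ReflTransGen r (g 0) (g j) from this _
    intro j
    induction j using Fin.induction with
    | zero => exact .refl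
    | succ j ih => exact ih.tail (hg j)

end Relation

namespace MvPolynomial

variable {σ : Type*}

noncomputable def tupleExponent {n : ℕ} (f : Fin n → σ) : σ →₀ ℕ :=
  ∑ i, Finsupp.single (f i) 1

theorem prod_X_eq_monomial_tupleExponent {R : Type*} [CommSemiring R] {n : ℕ} (f : Fin n → σ) :
    (∏ i, X (f i) : MvPolynomial σ R) = monomial (tupleExponent f) 1 :=
  (monomial_sum_one _ _).symm

theorem monomial_add_tupleExponent {R : Type*} [CommSemiring R] {n : ℕ} (μ : σ →₀ ℕ)
    (f : Fin n → σ) :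
    (monomial (μ + tupleExponent f) 1 : MvPolynomial σ R) = monomial μ 1 * ∏ i, X (f i) := by
  rw [prod_X_eq_monomial_tupleExponent, monomial_mul, one_mul]

@[simp]
theorem degree_tupleExponent {n : ℕ} (f : Fin n → σ) : (tupleExponent f).degree = n := by
  simp [tupleExponent]

theorem tupleExponent_apply_ne_zero_iff {n : ℕ} (f : Fin n → σ) (x : σ) :
    tupleExponent f x ≠ 0 ↔ ∃ i, f i = x := by
  classical
  simp [tupleExponent, Finsupp.finsetSum_apply, Finsupp.single_apply]

theorem exists_tupleExponent_eq : ∀ {n : ℕ} {α : σ →₀ ℕ}, α.degree = n →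
    ∃ f : Fin n → σ, tupleExponent f = α
  | 0, α, h => ⟨Fin.elim0, by simp [tupleExponent, ((Finsupp.degree_eq_zero_iff α).mp h)]⟩
  | n + 1, α, h => by
    obtain ⟨x, hx⟩ : ∃ x, α x ≠ 0 := by
      by_contra! h0
      simp [show α = 0 from Finsupp.ext h0] at h
    obtain ⟨β, rfl⟩ :=
      exists_add_of_le (Finsupp.single_le_iff.mpr (Nat.one_le_iff_ne_zero.mpr hx))
    obtain ⟨f, rfl⟩ := exists_tupleExponent_eq (n := n) (α := β) (by simp at h; omega)
    exact ⟨Fin.cons x f, by simp [tupleExponent, Fin.sum_univ_succ]⟩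

variable {K : Type*} [CommRing K] {A : Type*} [CommSemiring A] [Algebra K A]
  (ψ : MvPolynomial σ K →ₐ[K] A)

def binomialsOfDegree (n : ℕ) : Set (MvPolynomial σ K) :=
  {g | ∃ u u' : Fin n → σ, ψ (∏ i, X (u i)) = ψ (∏ i, X (u' i)) ∧
    g = ∏ i, X (u i) - ∏ i, X (u' i)}

def FiberAdjacent (x y : σ →₀ ℕ) : Prop :=
  ψ (monomial x 1) = ψ (monomial y 1) ∧ x.degree = y.degree ∧ ∃ i, x i ≠ 0 ∧ y i ≠ 0

variable {ψ}

theorem FiberAdjacent.symm {x y : σ →₀ ℕ} (h : FiberAdjacent ψ x y) :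
    FiberAdjacent ψ y x :=
  let ⟨hψ, hdeg, i, hx, hy⟩ := h
  ⟨hψ.symm, hdeg.symm, i, hy, hx⟩

theorem degree_eq_of_reflTransGen_fiberAdjacent {x y : σ →₀ ℕ}
    (h : Relation.ReflTransGen (FiberAdjacent ψ) x y) : y.degree = x.degree := by
  induction h with
  | refl => rfl
  | tail _ hyz ih => exact hyz.2.1.symm.trans ih

theorem monomial_sub_mem_span_of_fiberAdjacent (hψ : ∀ i, IsLeftRegular (ψ (X i))) {n : ℕ}
    {x y : σ →₀ ℕ} (hx : x.degree = n + 1) (hxy : FiberAdjacent ψ x y) :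
    monomial x 1 - monomial y 1 ∈ Ideal.span (binomialsOfDegree ψ n) := by
  obtain ⟨hψxy, hdeg, i, hxi, hyi⟩ := hxy
  have hle {z : σ →₀ ℕ} (hz : z i ≠ 0) : Finsupp.single i 1 ≤ z :=
    Finsupp.single_le_iff.mpr (Nat.one_le_iff_ne_zero.mpr hz)
  obtain ⟨x', rfl⟩ := exists_add_of_le (hle hxi)
  obtain ⟨y', rfl⟩ := exists_add_of_le (hle hyi)
  obtain ⟨u, rfl⟩ := exists_tupleExponent_eq (n := n) (α := x') (by simp at hx; omega)
  obtain ⟨u', rfl⟩ := exists_tupleExponent_eq (n := n) (α := y') (by simp at hx hdeg; omega)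
  rw [monomial_add_tupleExponent, monomial_add_tupleExponent, map_mul, map_mul] at hψxy
  rw [monomial_add_tupleExponent, monomial_add_tupleExponent, ← mul_sub]
  exact Ideal.mul_mem_left _ _ (Ideal.subset_span ⟨u, u', hψ i hψxy, rfl⟩)

theorem monomial_sub_mem_span_of_reflTransGen_fiberAdjacent (hψ : ∀ i, IsLeftRegular (ψ (X i)))
    {n : ℕ} {a b : σ →₀ ℕ} (ha : a.degree = n + 1)
    (hab : Relation.ReflTransGen (FiberAdjacent ψ) a b) :
    monomial a 1 - monomial b 1 ∈ Ideal.span (binomialsOfDegree ψ n) := by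
  induction hab with
  | refl => simp
  | @tail b c hab hbc ih =>
    rw [← sub_add_sub_cancel _ (monomial b 1)]
    exact add_mem ih (monomial_sub_mem_span_of_fiberAdjacent hψ
      ((degree_eq_of_reflTransGen_fiberAdjacent hab).trans ha) hbc)

theorem reflTransGen_fiberAdjacent_of_monomial_sub_mem_span [Nontrivial K] {n : ℕ}
    {a b : σ →₀ ℕ} (ha : a.degree = n + 1)
    (hab : monomial a 1 - monomial b 1 ∈ Ideal.span (binomialsOfDegree ψ n)) :
    Relation.ReflTransGen (FiberAdjacent ψ) a b := by
  classical
  set c := Relation.ReflTransGen (FiberAdjacent ψ) a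
  let ℓ := (basisMonomials σ K).constr K fun μ => if c μ then (1 : K) else 0
  have hℓ (μ : σ →₀ ℕ) : ℓ (monomial μ 1) = if c μ then 1 else 0 := by
    simpa using (basisMonomials σ K).constr_basis K (fun μ => if c μ then (1 : K) else 0) μ
  have hc {μ : σ →₀ ℕ} {u u' : Fin n → σ}
      (h : ψ (∏ i, X (u i)) = ψ (∏ i, X (u' i))) :
      c (μ + tupleExponent u) ↔ c (μ + tupleExponent u') := by
    rcases eq_or_ne μ 0 with rfl | hμ
    · have hdeg {v : Fin n → σ} : ¬ c (0 + tupleExponent v) := fun hv => by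
        simpa [ha] using degree_eq_of_reflTransGen_fiberAdjacent hv
      exact iff_of_false hdeg hdeg
    · obtain ⟨i, hi⟩ := Finsupp.ne_iff.mp hμ
      have hadj : FiberAdjacent ψ (μ + tupleExponent u) (μ + tupleExponent u') := by
        refine ⟨?_, by simp, i, by simp_all, by simp_all⟩
        rw [monomial_add_tupleExponent, monomial_add_tupleExponent, map_mul, map_mul, h]
      exact ⟨fun hu => hu.tail hadj, fun hu' => hu'.tail hadj.symm⟩
  -- `Ideal.span` is the `K`-span of the monomial multiples of its generators.
  have hker : (Ideal.span (binomialsOfDegree ψ n)).restrictScalars K ≤ LinearMap.ker ℓ := by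
    rw [← Submodule.span_smul_of_span_eq_top (basisMonomials σ K).span_eq, Submodule.span_le]
    rintro _ ⟨_, ⟨μ, rfl⟩, _, ⟨u, u', h, rfl⟩, rfl⟩
    simp [coe_basisMonomials, mul_sub, ← monomial_add_tupleExponent, hℓ, hc h]
  have hca : c a := .refl
  by_contra hb
  simpa [hℓ, hca, hb] using hker hab

theorem reflTransGen_fiberAdjacent_iff_exists_chain [Nontrivial K] {n : ℕ} (f f' : Fin n → σ) :
    Relation.ReflTransGen (FiberAdjacent ψ) (tupleExponent f) (tupleExponent f') ↔
      ∃ (t : ℕ) (g : Fin (t + 1) → Fin n → σ),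
        ((∏ i, X (g 0 i) : MvPolynomial σ K) = ∏ i, X (f i)) ∧
        ((∏ i, X (g (Fin.last t) i) : MvPolynomial σ K) = ∏ i, X (f' i)) ∧
        (∀ j, ψ (∏ i, X (g j i)) = ψ (∏ i, X (f i))) ∧
        (∀ j : Fin t, ∃ x, (∃ i, g j.castSucc i = x) ∧ (∃ i, g j.succ i = x)) := by
  simp only [prod_X_eq_monomial_tupleExponent, monomial_left_inj one_ne_zero,
    Relation.reflTransGen_iff_exists_fin, ← tupleExponent_apply_ne_zero_iff]
  constructor
  · rintro ⟨t, e, h0, hlast, he⟩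
    have hfiber (j : Fin (t + 1)) :
        (e j).degree = n ∧ ψ (monomial (e j) 1) = ψ (monomial (tupleExponent f) 1) := by
      induction j using Fin.induction with
      | zero => simp [h0]
      | succ j ih => exact ⟨(he j).2.1 ▸ ih.1, (he j).1 ▸ ih.2⟩
    choose g hg using fun j => exists_tupleExponent_eq (hfiber j).1
    refine ⟨t, g, by rw [hg, h0], by rw [hg, hlast], fun j => by rw [hg]; exact (hfiber j).2,
      fun j => ?_⟩
    simpa only [hg] using (he j).2.2
  · rintro ⟨t, g, h0, hlast, hψg, hshare⟩
    exact ⟨t, fun j => tupleExponent (g j), h0, hlast,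
      fun j => ⟨(hψg _).trans (hψg _).symm, by simp, hshare j⟩⟩

theorem prod_X_sub_prod_X_mem_span_binomialsOfDegree_iff [Nontrivial K]
    (hψ : ∀ i, IsLeftRegular (ψ (X i))) {n : ℕ} (f f' : Fin (n + 1) → σ) :
    (∏ i, X (f i)) - (∏ i, X (f' i)) ∈ Ideal.span (binomialsOfDegree ψ n) ↔
      ∃ (t : ℕ) (g : Fin (t + 1) → Fin (n + 1) → σ),
        ((∏ i, X (g 0 i) : MvPolynomial σ K) = ∏ i, X (f i)) ∧
        ((∏ i, X (g (Fin.last t) i) : MvPolynomial σ K) = ∏ i, X (f' i)) ∧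
        (∀ j, ψ (∏ i, X (g j i)) = ψ (∏ i, X (f i))) ∧
        (∀ j : Fin t, ∃ x, (∃ i, g j.castSucc i = x) ∧ (∃ i, g j.succ i = x)) := by
  rw [← reflTransGen_fiberAdjacent_iff_exists_chain, prod_X_eq_monomial_tupleExponent,
    prod_X_eq_monomial_tupleExponent]
  exact ⟨reflTransGen_fiberAdjacent_of_monomial_sub_mem_span (degree_tupleExponent f),
    monomial_sub_mem_span_of_reflTransGen_fiberAdjacent hψ (degree_tupleExponent f)⟩

end MvPolynomial

theorem isLeftRegular_psi_X (K : Type*) [Field K] (d : ℕ) (x : Wset d) :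
    IsLeftRegular (psi d K (X x)) :=
  (IsRegular.of_ne_zero (by simp [psi, X_ne_zero])).left

theorem stmt19_general (K : Type*) [Field K] (d : ℕ)
    (n : ℕ) (hn : 3 ≤ n) (f f' : Fin n → ↥(Wset d)) :
    ((∏ i, X (f i)) - (∏ i, X (f' i)) ∈
        Ideal.span {g : MvPolynomial ↥(Wset d) K |
          ∃ u u' : Fin (n - 1) → ↥(Wset d),
            psi d K (∏ i, X (u i)) = psi d K (∏ i, X (u' i)) ∧
            g = (∏ i, X (u i)) - ∏ i, X (u' i)}) ↔
      ∃ (t : ℕ) (g : Fin (t + 1) → Fin n → ↥(Wset d)),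
        ((∏ i, X (g 0 i) : MvPolynomial ↥(Wset d) K) = ∏ i, X (f i)) ∧
        ((∏ i, X (g (Fin.last t) i) : MvPolynomial ↥(Wset d) K) = ∏ i, X (f' i)) ∧
        (∀ j, psi d K (∏ i, X (g j i)) = psi d K (∏ i, X (f i))) ∧
        (∀ j : Fin t, ∃ x : ↥(Wset d),
          (∃ i, g j.castSucc i = x) ∧ (∃ i, g j.succ i = x)) := by
  obtain ⟨m, rfl⟩ : ∃ m, n = m + 1 := ⟨n - 1, by omega⟩
  exact prod_X_sub_prod_X_mem_span_binomialsOfDegree_iff (isLeftRegular_psi_X K d) f f'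

/-- For `d ≥ 4` and `n ≥ 3`: a suitable `n`-binomial `m − m'` (with
`m = ∏ w_{f i}`, `m' = ∏ w_{f' i}` and `ψ(m) = ψ(m')`) lies in the ideal
generated by the suitable `(n−1)`-binomials iff there is an
`I₊(η)_n`-sequence from `m` to `m'`: a finite sequence of degree-`n` monomials,
all with the same `ψ`-image, starting at `m`, ending at `m'`, in which
consecutive monomials share a common variable. -/
theorem stmt19 (K : Type*) [Field K] (d : ℕ) (hd : 4 ≤ d)
    (n : ℕ) (hn : 3 ≤ n) (f f' : Fin n → ↥(Wset d))
    (h : psi d K (∏ i, X (f i)) = psi d K (∏ i, X (f' i))) :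
    ((∏ i, X (f i)) - (∏ i, X (f' i)) ∈
        Ideal.span {g : MvPolynomial ↥(Wset d) K |
          ∃ u u' : Fin (n - 1) → ↥(Wset d),
            psi d K (∏ i, X (u i)) = psi d K (∏ i, X (u' i)) ∧
            g = (∏ i, X (u i)) - ∏ i, X (u' i)}) ↔
      ∃ (t : ℕ) (g : Fin (t + 1) → Fin n → ↥(Wset d)),
        ((∏ i, X (g 0 i) : MvPolynomial ↥(Wset d) K) = ∏ i, X (f i)) ∧
        ((∏ i, X (g (Fin.last t) i) : MvPolynomial ↥(Wset d) K) = ∏ i, X (f' i)) ∧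
        (∀ j, psi d K (∏ i, X (g j i)) = psi d K (∏ i, X (f i))) ∧
        (∀ j : Fin t, ∃ x : ↥(Wset d),
          (∃ i, g j.castSucc i = x) ∧ (∃ i, g j.succ i = x)) :=
  stmt19_general K d n hn f f'
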